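/- For jointly distributed finite random variables X, Y_1, Y_2, W_2 satisfying the Markov chain W_2 ↔ X ↔ Y_1 ↔ Y_2, it holds that I(X; W_2 | Y_2) ≥ I(X; W_2 | Y_1); equivalently, degrading the side information from Y_1 to Y_2 cannot decrease the conditional mutual information with X. -/

import Mathlib

/-!
The chain rule turns `I(X;W₂|Y₂) - I(X;W₂|Y₁)` into
`I(W₂;Y₁|Y₂) + I(W₂;Y₂|X,Y₁) - I(W₂;Y₁|X,Y₂) - I(W₂;Y₂|Y₁)`, an identity between entropies.
The Markov chain makes the joint pmf factor as `f(w,x) g(x,y₁) h(y₁,y₂)`, and each of the last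
three terms is the mutual information of two variables whose joint law given the conditioning
variable factors, hence vanishes. What remains is `I(W₂;Y₁|Y₂) ≥ 0`.
-/

open scoped BigOperators

namespace SIScalable

variable {Ω : Type*} [Fintype Ω]

/-- Probability that a finite random variable `X` takes value `a`, under pmf `μ`. -/
noncomputable def pr (μ : Ω → ℝ) {A : Type*} [DecidableEq A] (X : Ω → A) (a : A) : ℝ :=
  ∑ ω, if X ω = a then μ ω else 0

/-- `μ` is a probability mass function. -/
def IsPMF (μ : Ω → ℝ) : Prop := (∀ ω, 0 ≤ μ ω) ∧ ∑ ω, μ ω = 1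

/-- Shannon entropy (in bits) of a finite random variable. -/
noncomputable def ent (μ : Ω → ℝ) {A : Type*} [Fintype A] [DecidableEq A] (X : Ω → A) : ℝ :=
  -∑ a : A, pr μ X a * Real.logb 2 (pr μ X a)

/-- Conditional Shannon entropy `H(X|Y)`. -/
noncomputable def condEnt (μ : Ω → ℝ) {A B : Type*} [Fintype A] [DecidableEq A]
    [Fintype B] [DecidableEq B] (X : Ω → A) (Y : Ω → B) : ℝ :=
  ent μ (fun ω => (X ω, Y ω)) - ent μ Y

/-- Conditional mutual information `I(X;Y|Z)`. -/
noncomputable def cmi (μ : Ω → ℝ) {A B C : Type*} [Fintype A] [DecidableEq A]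
    [Fintype B] [DecidableEq B] [Fintype C] [DecidableEq C]
    (X : Ω → A) (Y : Ω → B) (Z : Ω → C) : ℝ :=
  ent μ (fun ω => (X ω, Z ω)) + ent μ (fun ω => (Y ω, Z ω))
    - ent μ (fun ω => (X ω, Y ω, Z ω)) - ent μ Z

section

variable {μ : Ω → ℝ} {A B C D : Type*} [DecidableEq A] [DecidableEq B] [DecidableEq C]
  [DecidableEq D]

lemma pr_nonneg (hμ : ∀ ω, 0 ≤ μ ω) (S : Ω → A) (a : A) : 0 ≤ pr μ S a :=
  Finset.sum_nonneg fun ω _ => by split_ifs <;> simp [hμ ω]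

lemma pr_mono (hμ : ∀ ω, 0 ≤ μ ω) {S : Ω → A} {T : Ω → B} {a : A} {b : B}
    (h : ∀ ω, S ω = a → T ω = b) : pr μ S a ≤ pr μ T b :=
  Finset.sum_le_sum fun ω _ => by
    by_cases hS : S ω = a
    · simp [hS, h ω hS]
    · simp only [hS, if_false]; split_ifs <;> simp [hμ ω]

lemma pr_eq_zero_of_imp (hμ : ∀ ω, 0 ≤ μ ω) {S : Ω → A} {T : Ω → B} {a : A} {b : B}
    (h : ∀ ω, S ω = a → T ω = b) (hT : pr μ T b = 0) : pr μ S a = 0 :=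
  le_antisymm (hT ▸ pr_mono hμ h) (pr_nonneg hμ S a)

lemma pr_congr {S : Ω → A} {T : Ω → B} {a : A} {b : B} (h : ∀ ω, S ω = a ↔ T ω = b) :
    pr μ S a = pr μ T b :=
  Finset.sum_congr rfl fun ω _ => if_congr (h ω) rfl rfl

lemma pr_self_pos (hμ : ∀ ω, 0 ≤ μ ω) {ω : Ω} (hω : 0 < μ ω) (S : Ω → A) :
    0 < pr μ S (S ω) :=
  calc 0 < if S ω = S ω then μ ω else 0 := by simpa using hω
    _ ≤ pr μ S (S ω) := Finset.single_le_sum (f := fun ω' => if S ω' = S ω then μ ω' else 0)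
        (fun ω' _ => by split_ifs <;> simp [hμ ω']) (Finset.mem_univ ω)

lemma sum_pr_mul [Fintype A] (S : Ω → A) (φ : A → ℝ) :
    ∑ a, pr μ S a * φ a = ∑ ω, μ ω * φ (S ω) := by
  simp only [pr, Finset.sum_mul, ite_mul, zero_mul]
  rw [Finset.sum_comm]
  simp

lemma sum_pr [Fintype A] (S : Ω → A) : ∑ a, pr μ S a = ∑ ω, μ ω := by
  simpa using sum_pr_mul (μ := μ) S 1

lemma sum_pr_pair_left [Fintype A] (T : Ω → A) (S : Ω → B) (b : B) :
    ∑ a, pr μ (fun ω => (T ω, S ω)) (a, b) = pr μ S b := by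
  simp only [pr, Prod.mk.injEq]
  rw [Finset.sum_comm]
  simp [ite_and]

lemma sum_pr_pair_right [Fintype B] (S : Ω → A) (T : Ω → B) (a : A) :
    ∑ b, pr μ (fun ω => (S ω, T ω)) (a, b) = pr μ S a := by
  simp only [pr, Prod.mk.injEq]
  rw [Finset.sum_comm]
  simp [ite_and]

lemma ent_eq_sum [Fintype A] (S : Ω → A) :
    ent μ S = -∑ ω, μ ω * Real.logb 2 (pr μ S (S ω)) := by
  rw [ent, sum_pr_mul]

lemma ent_congr [Fintype A] [Fintype B] {S : Ω → A} {T : Ω → B}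
    (h : ∀ ω ω', S ω = S ω' ↔ T ω = T ω') : ent μ S = ent μ T := by
  simp only [ent_eq_sum, pr_congr fun ω' => h ω' _]

lemma cmi_eq_sum [Fintype A] [Fintype B] [Fintype C] (X : Ω → A) (Y : Ω → B) (Z : Ω → C) :
    cmi μ X Y Z = ∑ ω, μ ω *
      (Real.logb 2 (pr μ (fun ω => (X ω, Y ω, Z ω)) (X ω, Y ω, Z ω))
        + Real.logb 2 (pr μ Z (Z ω))
        - Real.logb 2 (pr μ (fun ω => (X ω, Z ω)) (X ω, Z ω))
        - Real.logb 2 (pr μ (fun ω => (Y ω, Z ω)) (Y ω, Z ω))) := by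
  simp only [cmi, ent_eq_sum, mul_add, mul_sub, Finset.sum_add_distrib, Finset.sum_sub_distrib]
  ring

lemma one_sub_div_div_log_le_logb_sub {b x y : ℝ} (hb : 1 < b) (hx : 0 < x) (hy : 0 < y) :
    (1 - y / x) / Real.log b ≤ Real.logb b x - Real.logb b y := by
  rw [← Real.logb_div hx.ne' hy.ne', Real.logb, div_le_div_iff_of_pos_right (Real.log_pos hb),
    ← inv_div]
  exact Real.one_sub_inv_le_log_of_pos (div_pos hx hy)

lemma sum_pr_mul_pr_div_pr [Fintype A] [Fintype B] [Fintype C]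
    (X : Ω → A) (Y : Ω → B) (Z : Ω → C) :
    ∑ t : A × B × C, pr μ (fun ω => (X ω, Z ω)) (t.1, t.2.2)
      * pr μ (fun ω => (Y ω, Z ω)) (t.2.1, t.2.2) / pr μ Z t.2.2 = ∑ ω, μ ω := by
  simp only [Fintype.sum_prod_type]
  rw [Finset.sum_congr rfl fun a _ => Finset.sum_comm, Finset.sum_comm, ← sum_pr Z]
  refine Finset.sum_congr rfl fun c _ => ?_
  simp only [← Finset.sum_div, ← Finset.sum_mul_sum, sum_pr_pair_left, mul_self_div_self]

/-- Gibbs' inequality: `log t ≥ 1 - 1/t` at `t = p(x,y,z) p(z) / (p(x,z) p(y,z))`, while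
`∑ p(x,z) p(y,z) / p(z)` is the total mass of `μ`. -/
lemma cmi_nonneg [Fintype A] [Fintype B] [Fintype C] (hμ : ∀ ω, 0 ≤ μ ω)
    (X : Ω → A) (Y : Ω → B) (Z : Ω → C) : 0 ≤ cmi μ X Y Z := by
  set T := fun ω => (X ω, Y ω, Z ω)
  set ψ : A × B × C → ℝ := fun t => pr μ (fun ω => (X ω, Z ω)) (t.1, t.2.2)
      * pr μ (fun ω => (Y ω, Z ω)) (t.2.1, t.2.2) / (pr μ T t * pr μ Z t.2.2)
  have hψ : ∑ ω, μ ω * ψ (T ω) ≤ ∑ ω, μ ω := by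
    rw [← sum_pr_mul T ψ, ← sum_pr_mul_pr_div_pr (μ := μ) X Y Z]
    refine Finset.sum_le_sum fun t _ => ?_
    rcases eq_or_ne (pr μ T t) 0 with h0 | h0
    · simp only [h0, zero_mul]
      exact div_nonneg (mul_nonneg (pr_nonneg hμ _ _) (pr_nonneg hμ _ _)) (pr_nonneg hμ _ _)
    · rw [← mul_div_assoc, mul_div_mul_left _ _ h0]
  have hterm : ∀ ω, μ ω * ((1 - ψ (T ω)) / Real.log 2) ≤ μ ω *
      (Real.logb 2 (pr μ T (T ω)) + Real.logb 2 (pr μ Z (Z ω))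
        - Real.logb 2 (pr μ (fun ω => (X ω, Z ω)) (X ω, Z ω))
        - Real.logb 2 (pr μ (fun ω => (Y ω, Z ω)) (Y ω, Z ω))) := by
    intro ω
    rcases (hμ ω).eq_or_lt with h0 | hω
    · simp [← h0]
    refine mul_le_mul_of_nonneg_left ?_ hω.le
    rw [sub_sub, ← Real.logb_mul (pr_self_pos hμ hω T).ne' (pr_self_pos hμ hω Z).ne',
      ← Real.logb_mul (pr_self_pos hμ hω _).ne' (pr_self_pos hμ hω _).ne']
    exact one_sub_div_div_log_le_logb_sub one_lt_two
      (mul_pos (pr_self_pos hμ hω _) (pr_self_pos hμ hω _))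
      (mul_pos (pr_self_pos hμ hω _) (pr_self_pos hμ hω _))
  calc 0 ≤ (∑ ω, μ ω - ∑ ω, μ ω * ψ (T ω)) / Real.log 2 :=
        div_nonneg (sub_nonneg.2 hψ) (Real.log_pos one_lt_two).le
    _ = ∑ ω, μ ω * ((1 - ψ (T ω)) / Real.log 2) := by
        rw [← Finset.sum_sub_distrib, Finset.sum_div]
        exact Finset.sum_congr rfl fun ω _ => by ring
    _ ≤ _ := Finset.sum_le_sum fun ω _ => hterm ω
    _ = cmi μ X Y Z := (cmi_eq_sum X Y Z).symm

def CondIndep (μ : Ω → ℝ) (X : Ω → A) (Y : Ω → B) (Z : Ω → C) : Prop :=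
  ∀ a b c, pr μ (fun ω => (X ω, Y ω, Z ω)) (a, b, c) * pr μ Z c
    = pr μ (fun ω => (X ω, Z ω)) (a, c) * pr μ (fun ω => (Y ω, Z ω)) (b, c)

lemma cmi_eq_zero_of_condIndep [Fintype A] [Fintype B] [Fintype C] (hμ : ∀ ω, 0 ≤ μ ω)
    {X : Ω → A} {Y : Ω → B} {Z : Ω → C} (h : CondIndep μ X Y Z) : cmi μ X Y Z = 0 := by
  rw [cmi_eq_sum]
  refine Finset.sum_eq_zero fun ω _ => ?_
  rcases (hμ ω).eq_or_lt with h0 | hω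
  · simp [← h0]
  rw [sub_sub, ← Real.logb_mul (pr_self_pos hμ hω _).ne' (pr_self_pos hμ hω Z).ne',
    ← Real.logb_mul (pr_self_pos hμ hω _).ne' (pr_self_pos hμ hω _).ne', h, sub_self, mul_zero]

lemma condIndep_of_pr_eq_mul [Fintype A] [Fintype B] {X : Ω → A} {Y : Ω → B} {Z : Ω → C}
    (f : A → C → ℝ) (g : B → C → ℝ)
    (h : ∀ a b c, pr μ (fun ω => (X ω, Y ω, Z ω)) (a, b, c) = f a c * g b c) :
    CondIndep μ X Y Z := by
  have hXZ : ∀ a c, pr μ (fun ω => (X ω, Z ω)) (a, c) = f a c * ∑ b, g b c := by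
    intro a c
    rw [Finset.mul_sum, ← sum_pr_pair_right (fun ω => (X ω, Z ω)) Y]
    refine Finset.sum_congr rfl fun b _ => ?_
    rw [← h]
    exact pr_congr fun ω => by simp only [Prod.mk.injEq]; tauto
  intro a b c
  have hYZ : pr μ (fun ω => (Y ω, Z ω)) (b, c) = (∑ a, f a c) * g b c := by
    rw [Finset.sum_mul, ← sum_pr_pair_left X]
    exact Finset.sum_congr rfl fun a _ => h a b c
  have hZ : pr μ Z c = (∑ a, f a c) * ∑ b, g b c := by
    rw [← sum_pr_pair_left X, Finset.sum_mul]
    exact Finset.sum_congr rfl fun a _ => hXZ a c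
  rw [h, hXZ, hYZ, hZ]
  ring

lemma cmi_sub_cmi_eq [Fintype A] [Fintype B] [Fintype C] [Fintype D]
    (X : Ω → A) (W : Ω → B) (Y₁ : Ω → C) (Y₂ : Ω → D) :
    cmi μ X W Y₂ - cmi μ X W Y₁ = cmi μ W Y₁ Y₂ + cmi μ W Y₂ (fun ω => (X ω, Y₁ ω))
      - cmi μ W Y₁ (fun ω => (X ω, Y₂ ω)) - cmi μ W Y₂ Y₁ := by
  have e₁ : ent μ (fun ω => (X ω, W ω, Y₂ ω)) = ent μ (fun ω => (W ω, X ω, Y₂ ω)) :=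
    ent_congr fun _ _ => by simp only [Prod.mk.injEq]; tauto
  have e₂ : ent μ (fun ω => (X ω, W ω, Y₁ ω)) = ent μ (fun ω => (W ω, X ω, Y₁ ω)) :=
    ent_congr fun _ _ => by simp only [Prod.mk.injEq]; tauto
  have e₃ : ent μ (fun ω => (Y₂ ω, X ω, Y₁ ω)) = ent μ (fun ω => (Y₁ ω, X ω, Y₂ ω)) :=
    ent_congr fun _ _ => by simp only [Prod.mk.injEq]; tauto
  have e₄ : ent μ (fun ω => (W ω, Y₂ ω, X ω, Y₁ ω)) = ent μ (fun ω => (W ω, Y₁ ω, X ω, Y₂ ω)) :=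
    ent_congr fun _ _ => by simp only [Prod.mk.injEq]; tauto
  have e₅ : ent μ (fun ω => (Y₂ ω, Y₁ ω)) = ent μ (fun ω => (Y₁ ω, Y₂ ω)) :=
    ent_congr fun _ _ => by simp only [Prod.mk.injEq]; tauto
  have e₆ : ent μ (fun ω => (W ω, Y₂ ω, Y₁ ω)) = ent μ (fun ω => (W ω, Y₁ ω, Y₂ ω)) :=
    ent_congr fun _ _ => by simp only [Prod.mk.injEq]; tauto
  simp only [cmi]
  linear_combination -e₁ + e₂ - e₃ + e₄ + e₅ - e₆

/-- `W - X - Y₁ - Y₂` in factorization form, which avoids dividing by marginals. -/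
def IsMarkovChain (μ : Ω → ℝ) (W : Ω → A) (X : Ω → B) (Y₁ : Ω → C) (Y₂ : Ω → D) : Prop :=
  ∃ (f : A → B → ℝ) (g : B → C → ℝ) (h : C → D → ℝ), ∀ w x y₁ y₂,
    pr μ (fun ω => (W ω, X ω, Y₁ ω, Y₂ ω)) (w, x, y₁, y₂) = f w x * g x y₁ * h y₁ y₂

lemma isMarkovChain_of_pr_mul_eq (hμ : ∀ ω, 0 ≤ μ ω)
    {W : Ω → A} {X : Ω → B} {Y₁ : Ω → C} {Y₂ : Ω → D}
    (h : ∀ w x y₁ y₂, pr μ (fun ω => (W ω, X ω, Y₁ ω, Y₂ ω)) (w, x, y₁, y₂)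
        * pr μ X x * pr μ Y₁ y₁
      = pr μ (fun ω => (W ω, X ω)) (w, x) * pr μ (fun ω => (X ω, Y₁ ω)) (x, y₁)
        * pr μ (fun ω => (Y₁ ω, Y₂ ω)) (y₁, y₂)) :
    IsMarkovChain μ W X Y₁ Y₂ := by
  refine ⟨fun w x => pr μ (fun ω => (W ω, X ω)) (w, x) / pr μ X x,
    fun x y₁ => pr μ (fun ω => (X ω, Y₁ ω)) (x, y₁),
    fun y₁ y₂ => pr μ (fun ω => (Y₁ ω, Y₂ ω)) (y₁, y₂) / pr μ Y₁ y₁, fun w x y₁ y₂ => ?_⟩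
  dsimp only
  -- where a marginal vanishes so does the joint, and `x / 0 = 0` makes the factorization hold
  rcases eq_or_ne (pr μ X x) 0 with hx | hx
  · rw [pr_eq_zero_of_imp hμ (fun ω hω => congrArg (·.2.1) hω) hx, hx, div_zero, zero_mul,
      zero_mul]
  rcases eq_or_ne (pr μ Y₁ y₁) 0 with hy | hy
  · rw [pr_eq_zero_of_imp hμ (fun ω hω => congrArg (·.2.2.1) hω) hy, hy, div_zero, mul_zero]
  field_simp
  linear_combination h w x y₁ y₂

namespace IsMarkovChain

variable {W : Ω → A} {X : Ω → B} {Y₁ : Ω → C} {Y₂ : Ω → D}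

lemma condIndep_one_four_of_two_three [Fintype A] [Fintype D]
    (hM : IsMarkovChain μ W X Y₁ Y₂) : CondIndep μ W Y₂ (fun ω => (X ω, Y₁ ω)) := by
  obtain ⟨f, g, h, hfac⟩ := hM
  refine condIndep_of_pr_eq_mul (fun w c => f w c.1) (fun y₂ c => g c.1 c.2 * h c.2 y₂) ?_
  rintro w y₂ ⟨x, y₁⟩
  rw [← mul_assoc, ← hfac]
  exact pr_congr fun ω => by simp only [Prod.mk.injEq]; tauto

lemma condIndep_one_three_of_two_four [Fintype A] [Fintype C]
    (hM : IsMarkovChain μ W X Y₁ Y₂) : CondIndep μ W Y₁ (fun ω => (X ω, Y₂ ω)) := by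
  obtain ⟨f, g, h, hfac⟩ := hM
  refine condIndep_of_pr_eq_mul (fun w c => f w c.1) (fun y₁ c => g c.1 y₁ * h y₁ c.2) ?_
  rintro w y₁ ⟨x, y₂⟩
  rw [← mul_assoc, ← hfac]
  exact pr_congr fun ω => by simp only [Prod.mk.injEq]; tauto

lemma condIndep_one_four_of_three [Fintype A] [Fintype B] [Fintype D]
    (hM : IsMarkovChain μ W X Y₁ Y₂) : CondIndep μ W Y₂ Y₁ := by
  obtain ⟨f, g, h, hfac⟩ := hM
  refine condIndep_of_pr_eq_mul (fun w y₁ => ∑ x, f w x * g x y₁) (fun y₂ y₁ => h y₁ y₂) ?_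
  intro w y₂ y₁
  rw [← sum_pr_pair_left X, Finset.sum_mul]
  refine Finset.sum_congr rfl fun x _ => ?_
  rw [← hfac]
  exact pr_congr fun ω => by simp only [Prod.mk.injEq]; tauto

end IsMarkovChain

end

/-- If W₂ ↔ X ↔ Y₁ ↔ Y₂ is a Markov chain then
I(X;W₂|Y₂) ≥ I(X;W₂|Y₁). -/
theorem degraded_side_info_increases_cmi
    {Ω 𝒳 𝒴₁ 𝒴₂ 𝒲₂ : Type*} [Fintype Ω]
    [Fintype 𝒳] [DecidableEq 𝒳] [Fintype 𝒴₁] [DecidableEq 𝒴₁]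
    [Fintype 𝒴₂] [DecidableEq 𝒴₂] [Fintype 𝒲₂] [DecidableEq 𝒲₂]
    (μ : Ω → ℝ) (hμ : IsPMF μ)
    (X : Ω → 𝒳) (Y₁ : Ω → 𝒴₁) (Y₂ : Ω → 𝒴₂) (W₂ : Ω → 𝒲₂)
    (hMarkov : ∀ (w₂ : 𝒲₂) (x : 𝒳) (y₁ : 𝒴₁) (y₂ : 𝒴₂),
      pr μ (fun ω => (W₂ ω, X ω, Y₁ ω, Y₂ ω)) (w₂, x, y₁, y₂)
          * pr μ X x * pr μ Y₁ y₁
        = pr μ (fun ω => (W₂ ω, X ω)) (w₂, x)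
          * pr μ (fun ω => (X ω, Y₁ ω)) (x, y₁)
          * pr μ (fun ω => (Y₁ ω, Y₂ ω)) (y₁, y₂)) :
    cmi μ X W₂ Y₁ ≤ cmi μ X W₂ Y₂ := by
  have hchain := isMarkovChain_of_pr_mul_eq hμ.1 hMarkov
  have h₁ := cmi_eq_zero_of_condIndep hμ.1 hchain.condIndep_one_four_of_two_three
  have h₂ := cmi_eq_zero_of_condIndep hμ.1 hchain.condIndep_one_three_of_two_four
  have h₃ := cmi_eq_zero_of_condIndep hμ.1 hchain.condIndep_one_four_of_three
  linarith [cmi_sub_cmi_eq (μ := μ) X W₂ Y₁ Y₂, cmi_nonneg hμ.1 W₂ Y₁ Y₂]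

end SIScalable
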